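/- Semi-discrete energy dissipation identity for the staggered energy-based DG method in one dimension with periodic boundary conditions: With the notation of the context, if φ_j = w_j and ψ_j = v_j for every j ∈ ZMod N, then B_c(w,v;w,v) = − β·c⁴ · Σ_{j ∈ ZMod N} (w_{j−1}(h) − w_j(0))² − τ · Σ_{j ∈ ZMod N} (v_j(h) − v_{j+1}(0))². In particular B_c(w,v;w,v) ≤ 0 for all β, τ ≥ 0. -/

import Mathlib

open Polynomial

/-- Squared L² norm of a broken (piecewise polynomial) function on a periodic grid
of `N` elements each of width `h`, in local coordinates `s ∈ [0,h]`. -/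
noncomputable def brokenNormSq (N : ℕ) [NeZero N] (h : ℝ)
    (p : ZMod N → Polynomial ℝ) : ℝ :=
  ∑ j : ZMod N, ∫ s in (0:ℝ)..h, (p j).eval s ^ 2

/-- The numerical flux `H_j` of the staggered energy-based DG method, located at
the primary node `jh`, interior to the dual element `J_j`. -/
noncomputable def HfluxS (N : ℕ) [NeZero N] (h c β : ℝ)
    (w v : ZMod N → Polynomial ℝ) (j : ZMod N) : ℝ :=
  (v j).eval (h / 2) - β * c ^ 2 * ((w (j - 1)).eval h - (w j).eval 0)

/-- The numerical flux `G_j` of the staggered energy-based DG method, located at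
the primary element center `(j+1/2)h`, the shared boundary of `J_j` and `J_{j+1}`. -/
noncomputable def GfluxS (N : ℕ) [NeZero N] (h c τ : ℝ)
    (w v : ZMod N → Polynomial ℝ) (j : ZMod N) : ℝ :=
  (w j).eval (h / 2) - τ / c ^ 2 * ((v j).eval h - (v (j + 1)).eval 0)

/-- The staggered energy-based DG bilinear form `B_c(w,v;φ,ψ)`. -/
noncomputable def BformS (N : ℕ) [NeZero N] (h c β τ : ℝ)
    (w v φ ψ : ZMod N → Polynomial ℝ) : ℝ :=
  -(c ^ 2) * (∑ j : ZMod N,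
      ((∫ s in (0:ℝ)..(h / 2), (derivative (φ j)).eval s * (v j).eval (s + h / 2))
        + (∫ s in (h / 2)..h, (derivative (φ j)).eval s * (v (j + 1)).eval (s - h / 2))
        - (φ j).eval h * HfluxS N h c β w v (j + 1)
        + (φ j).eval 0 * HfluxS N h c β w v j))
    - c ^ 2 * (∑ j : ZMod N,
      ((∫ s in (0:ℝ)..(h / 2), (derivative (ψ j)).eval s * (w (j - 1)).eval (s + h / 2))
        + (∫ s in (h / 2)..h, (derivative (ψ j)).eval s * (w j).eval (s - h / 2))
        - (ψ j).eval h * GfluxS N h c τ w v j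
        + (ψ j).eval 0 * GfluxS N h c τ w v (j - 1)))

lemma contAux (p : Polynomial ℝ) (c : ℝ) : Continuous fun s : ℝ => p.eval (s + c) :=
  p.continuous.comp (continuous_id.add continuous_const)

lemma ibpAux (p q : Polynomial ℝ) (a b c : ℝ) :
    (∫ s in a..b, (derivative p).eval s * q.eval (s + c)) +
      (∫ s in a..b, p.eval s * (derivative q).eval (s + c)) =
      p.eval b * q.eval (b + c) - p.eval a * q.eval (a + c) := by
  have hd : ∀ s : ℝ, HasDerivAt (fun t => p.eval t * q.eval (t + c))
      ((derivative p).eval s * q.eval (s + c) + p.eval s * (derivative q).eval (s + c)) s := by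
    intro s
    have h2 : HasDerivAt (fun t : ℝ => q.eval (t + c)) ((derivative q).eval (s + c)) s := by
      exact ((q.hasDerivAt (s + c)).comp s ((hasDerivAt_id s).add_const c)).congr_deriv (mul_one _)
    exact (p.hasDerivAt s).mul h2
  have hc1 : Continuous fun s : ℝ => (derivative p).eval s * q.eval (s + c) :=
    (derivative p).continuous.mul (contAux q c)
  have hc2 : Continuous fun s : ℝ => p.eval s * (derivative q).eval (s + c) :=
    p.continuous.mul (contAux (derivative q) c)
  rw [← intervalIntegral.integral_add (hc1.intervalIntegrable a b) (hc2.intervalIntegrable a b)]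
  exact intervalIntegral.integral_eq_sub_of_hasDerivAt (fun x _ => hd x)
    ((hc1.add hc2).intervalIntegrable a b)

lemma substAux (f g : ℝ → ℝ) (h : ℝ) :
    (∫ s in (h/2)..h, f s * g (s - h/2)) = ∫ s in (0:ℝ)..(h/2), g s * f (s + h/2) := by
  have := intervalIntegral.integral_comp_add_right (a := (0:ℝ)) (b := h/2)
      (fun x => f x * g (x - h/2)) (h/2)
  simp only [add_sub_cancel_right, zero_add] at this
  rw [show h/2 + h/2 = h by ring] at this
  rw [← this]
  simp [mul_comm]

/-- Semi-discrete energy dissipation identity for the staggered energy-based DG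
method with periodic boundary conditions. -/
theorem staggered_energy_dissipation
    (N : ℕ) [NeZero N] (hN : 1 ≤ N) (h c : ℝ) (hh : 0 < h) (hc : 0 < c)
    (qu qv : ℕ) (hqu : 1 ≤ qu) (β τ : ℝ) (hβ : 0 ≤ β) (hτ : 0 ≤ τ)
    (w v : ZMod N → Polynomial ℝ)
    (hw : ∀ j, (w j).natDegree ≤ qu - 1)
    (hv : ∀ j, (v j).natDegree ≤ qv) :
    BformS N h c β τ w v w v =
        -(β * c ^ 4) * ∑ j : ZMod N, ((w (j - 1)).eval h - (w j).eval 0) ^ 2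
          - τ * ∑ j : ZMod N, ((v j).eval h - (v (j + 1)).eval 0) ^ 2
      ∧ BformS N h c β τ w v w v ≤ 0 := by
  have hc2 : (c:ℝ) ^ 2 ≠ 0 := pow_ne_zero 2 hc.ne'
  have main : BformS N h c β τ w v w v =
      -(β * c ^ 4) * ∑ j : ZMod N, ((w (j - 1)).eval h - (w j).eval 0) ^ 2
        - τ * ∑ j : ZMod N, ((v j).eval h - (v (j + 1)).eval 0) ^ 2 := by
    have e1 : ∀ j : ZMod N,
        (∫ s in (h / 2)..h, (derivative (w j)).eval s * (v (j + 1)).eval (s - h / 2))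
          = ∫ s in (0:ℝ)..(h / 2), (v (j + 1)).eval s * (derivative (w j)).eval (s + h / 2) :=
      fun j => substAux (fun s => (derivative (w j)).eval s) (fun s => (v (j + 1)).eval s) h
    have e2 : ∀ j : ZMod N,
        (∫ s in (h / 2)..h, (derivative (v j)).eval s * (w j).eval (s - h / 2))
          = ∫ s in (0:ℝ)..(h / 2), (w j).eval s * (derivative (v j)).eval (s + h / 2) :=
      fun j => substAux (fun s => (derivative (v j)).eval s) (fun s => (w j).eval s) h
    simp only [BformS]
    simp only [e1, e2]
    have key : (∑ j : ZMod N,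
          ((∫ s in (0:ℝ)..(h / 2), (derivative (w j)).eval s * (v j).eval (s + h / 2))
            + (∫ s in (0:ℝ)..(h / 2), (v (j + 1)).eval s * (derivative (w j)).eval (s + h / 2))
            - (w j).eval h * HfluxS N h c β w v (j + 1)
            + (w j).eval 0 * HfluxS N h c β w v j))
        + (∑ j : ZMod N,
          ((∫ s in (0:ℝ)..(h / 2), (derivative (v j)).eval s * (w (j - 1)).eval (s + h / 2))
            + (∫ s in (0:ℝ)..(h / 2), (w j).eval s * (derivative (v j)).eval (s + h / 2))
            - (v j).eval h * GfluxS N h c τ w v j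
            + (v j).eval 0 * GfluxS N h c τ w v (j - 1)))
        = β * c ^ 2 * (∑ j : ZMod N, ((w (j - 1)).eval h - (w j).eval 0) ^ 2)
          + τ / c ^ 2 * (∑ j : ZMod N, ((v j).eval h - (v (j + 1)).eval 0) ^ 2) := by
      have split2 : (∑ j : ZMod N,
            ((∫ s in (0:ℝ)..(h / 2), (derivative (v j)).eval s * (w (j - 1)).eval (s + h / 2))
              + (∫ s in (0:ℝ)..(h / 2), (w j).eval s * (derivative (v j)).eval (s + h / 2))
              - (v j).eval h * GfluxS N h c τ w v j
              + (v j).eval 0 * GfluxS N h c τ w v (j - 1)))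
          = (∑ j : ZMod N,
              ∫ s in (0:ℝ)..(h / 2), (derivative (v j)).eval s * (w (j - 1)).eval (s + h / 2))
            + ∑ j : ZMod N,
              ((∫ s in (0:ℝ)..(h / 2), (w j).eval s * (derivative (v j)).eval (s + h / 2))
                - (v j).eval h * GfluxS N h c τ w v j
                + (v j).eval 0 * GfluxS N h c τ w v (j - 1)) := by
        rw [← Finset.sum_add_distrib]
        exact Finset.sum_congr rfl fun j _ => by ring
      have s3 : (∑ j : ZMod N,
            ∫ s in (0:ℝ)..(h / 2), (derivative (v j)).eval s * (w (j - 1)).eval (s + h / 2))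
          = ∑ j : ZMod N,
            ∫ s in (0:ℝ)..(h / 2), (derivative (v (j + 1))).eval s * (w j).eval (s + h / 2) := by
        refine (Fintype.sum_equiv (Equiv.addRight (1 : ZMod N)) _ _ fun j => ?_).symm
        simp
      rw [split2, s3, ← Finset.sum_add_distrib, ← Finset.sum_add_distrib]
      have hf1 : (∑ j : ZMod N, (v j).eval 0 * (w (j - 1)).eval (h / 2))
          = ∑ j : ZMod N, (v (j + 1)).eval 0 * (w j).eval (h / 2) := by
        refine (Fintype.sum_equiv (Equiv.addRight (1 : ZMod N)) _ _ fun j => ?_).symm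
        simp
      have hf2 : (∑ j : ZMod N, β * c ^ 2 * ((w j).eval 0 * ((w (j - 1)).eval h - (w j).eval 0)))
          = ∑ j : ZMod N, β * c ^ 2 * ((w (j + 1)).eval 0 * ((w j).eval h - (w (j + 1)).eval 0)) := by
        refine (Fintype.sum_equiv (Equiv.addRight (1 : ZMod N)) _ _ fun j => ?_).symm
        simp
      have hf3 : (∑ j : ZMod N, τ / c ^ 2 * ((v j).eval 0 * ((v (j - 1)).eval h - (v j).eval 0)))
          = ∑ j : ZMod N, τ / c ^ 2 * ((v (j + 1)).eval 0 * ((v j).eval h - (v (j + 1)).eval 0)) := by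
        refine (Fintype.sum_equiv (Equiv.addRight (1 : ZMod N)) _ _ fun j => ?_).symm
        simp
      have hf4 : (∑ j : ZMod N, β * c ^ 2 * ((w j).eval h - (w (j + 1)).eval 0) ^ 2)
          = ∑ j : ZMod N, β * c ^ 2 * ((w (j - 1)).eval h - (w j).eval 0) ^ 2 := by
        refine Fintype.sum_equiv (Equiv.addRight (1 : ZMod N)) _ _ fun j => ?_
        simp
      calc
        (∑ j : ZMod N,
            (((∫ s in (0:ℝ)..(h / 2), (derivative (w j)).eval s * (v j).eval (s + h / 2))
              + (∫ s in (0:ℝ)..(h / 2), (v (j + 1)).eval s * (derivative (w j)).eval (s + h / 2))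
              - (w j).eval h * HfluxS N h c β w v (j + 1)
              + (w j).eval 0 * HfluxS N h c β w v j)
            + ((∫ s in (0:ℝ)..(h / 2), (derivative (v (j + 1))).eval s * (w j).eval (s + h / 2))
              + ((∫ s in (0:ℝ)..(h / 2), (w j).eval s * (derivative (v j)).eval (s + h / 2))
                - (v j).eval h * GfluxS N h c τ w v j
                + (v j).eval 0 * GfluxS N h c τ w v (j - 1)))))
          = ∑ j : ZMod N,
            ((-((w j).eval (h / 2) * (v (j + 1)).eval 0)
                + β * c ^ 2 * ((w j).eval h * ((w j).eval h - (w (j + 1)).eval 0))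
                + τ / c ^ 2 * ((v j).eval h * ((v j).eval h - (v (j + 1)).eval 0)))
              + (v j).eval 0 * (w (j - 1)).eval (h / 2)
              - β * c ^ 2 * ((w j).eval 0 * ((w (j - 1)).eval h - (w j).eval 0))
              - τ / c ^ 2 * ((v j).eval 0 * ((v (j - 1)).eval h - (v j).eval 0))) := by
            refine Finset.sum_congr rfl fun j _ => ?_
            have i1 := ibpAux (w j) (v j) 0 (h / 2) (h / 2)
            have i2 := ibpAux (v (j + 1)) (w j) 0 (h / 2) (h / 2)
            rw [show h / 2 + h / 2 = h by ring] at i1 i2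
            rw [zero_add] at i1 i2
            simp only [HfluxS, GfluxS, add_sub_cancel_right, sub_add_cancel]
            linear_combination i1 + i2
        _ = (∑ j : ZMod N,
              (-((w j).eval (h / 2) * (v (j + 1)).eval 0)
                + β * c ^ 2 * ((w j).eval h * ((w j).eval h - (w (j + 1)).eval 0))
                + τ / c ^ 2 * ((v j).eval h * ((v j).eval h - (v (j + 1)).eval 0))))
            + (∑ j : ZMod N, (v j).eval 0 * (w (j - 1)).eval (h / 2))
            - (∑ j : ZMod N, β * c ^ 2 * ((w j).eval 0 * ((w (j - 1)).eval h - (w j).eval 0)))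
            - ∑ j : ZMod N, τ / c ^ 2 * ((v j).eval 0 * ((v (j - 1)).eval h - (v j).eval 0)) := by
            rw [Finset.sum_sub_distrib, Finset.sum_sub_distrib, Finset.sum_add_distrib]
        _ = (∑ j : ZMod N,
              (-((w j).eval (h / 2) * (v (j + 1)).eval 0)
                + β * c ^ 2 * ((w j).eval h * ((w j).eval h - (w (j + 1)).eval 0))
                + τ / c ^ 2 * ((v j).eval h * ((v j).eval h - (v (j + 1)).eval 0))))
            + (∑ j : ZMod N, (v (j + 1)).eval 0 * (w j).eval (h / 2))
            - (∑ j : ZMod N, β * c ^ 2 * ((w (j + 1)).eval 0 * ((w j).eval h - (w (j + 1)).eval 0)))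
            - ∑ j : ZMod N, τ / c ^ 2 * ((v (j + 1)).eval 0 * ((v j).eval h - (v (j + 1)).eval 0)) := by
            rw [hf1, hf2, hf3]
        _ = ∑ j : ZMod N,
              ((-((w j).eval (h / 2) * (v (j + 1)).eval 0)
                + β * c ^ 2 * ((w j).eval h * ((w j).eval h - (w (j + 1)).eval 0))
                + τ / c ^ 2 * ((v j).eval h * ((v j).eval h - (v (j + 1)).eval 0)))
              + (v (j + 1)).eval 0 * (w j).eval (h / 2)
              - β * c ^ 2 * ((w (j + 1)).eval 0 * ((w j).eval h - (w (j + 1)).eval 0))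
              - τ / c ^ 2 * ((v (j + 1)).eval 0 * ((v j).eval h - (v (j + 1)).eval 0))) := by
            rw [← Finset.sum_add_distrib, ← Finset.sum_sub_distrib, ← Finset.sum_sub_distrib]
        _ = ∑ j : ZMod N,
              (β * c ^ 2 * ((w j).eval h - (w (j + 1)).eval 0) ^ 2
                + τ / c ^ 2 * ((v j).eval h - (v (j + 1)).eval 0) ^ 2) :=
            Finset.sum_congr rfl fun j _ => by ring
        _ = (∑ j : ZMod N, β * c ^ 2 * ((w j).eval h - (w (j + 1)).eval 0) ^ 2)
            + ∑ j : ZMod N, τ / c ^ 2 * ((v j).eval h - (v (j + 1)).eval 0) ^ 2 :=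
            Finset.sum_add_distrib
        _ = β * c ^ 2 * (∑ j : ZMod N, ((w (j - 1)).eval h - (w j).eval 0) ^ 2)
            + τ / c ^ 2 * (∑ j : ZMod N, ((v j).eval h - (v (j + 1)).eval 0) ^ 2) := by
            rw [hf4, Finset.mul_sum, Finset.mul_sum]
    linear_combination (-(c ^ 2)) * key
      - (∑ j : ZMod N, ((v j).eval h - (v (j + 1)).eval 0) ^ 2) * div_mul_cancel₀ τ hc2
  refine ⟨main, ?_⟩
  rw [main]
  have hA : (0:ℝ) ≤ ∑ j : ZMod N, ((w (j - 1)).eval h - (w j).eval 0) ^ 2 :=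
    Finset.sum_nonneg fun j _ => sq_nonneg _
  have hB : (0:ℝ) ≤ ∑ j : ZMod N, ((v j).eval h - (v (j + 1)).eval 0) ^ 2 :=
    Finset.sum_nonneg fun j _ => sq_nonneg _
  have h1 : 0 ≤ β * c ^ 4 * ∑ j : ZMod N, ((w (j - 1)).eval h - (w j).eval 0) ^ 2 :=
    mul_nonneg (mul_nonneg hβ (by positivity)) hA
  have h2 : 0 ≤ τ * ∑ j : ZMod N, ((v j).eval h - (v (j + 1)).eval 0) ^ 2 :=
    mul_nonneg hτ hB
  linarith
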